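/- arXiv:2209.14963 — 2 statements merged into one kernel-verified Lean document; each statement's English description precedes it below -/
import Mathlib

section
/- Let R ∈ ℝ^{m×n} have every entry of absolute value at most C, let K := C/(1−β), and let T ≥ 1. Then the map π ↦ J_T(π,γ,R) from the metric space (Π_MR, μ) to (ℝ^m, ‖·‖_∞) is Lipschitz continuous with Lipschitz constant δ^{−(T−1)} (1−δ)^{−1} exp(|γ| K (1 − β^T)); that is, ‖J_T(π₁,γ,R) − J_T(π₂,γ,R)‖_∞ ≤ δ^{−(T−1)} (1−δ)^{−1} exp(|γ| K (1 − β^T)) · μ(π₁,π₂) for all policies π₁, π₂. -/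
open Finset Filter Matrix

/-- A row-stochastic matrix (decision rule): nonnegative entries, each row sums to 1. -/
def IsStoch (m n : ℕ) (d : Matrix (Fin m) (Fin n) ℝ) : Prop :=
  (∀ s a, 0 ≤ d s a) ∧ ∀ s, ∑ a, d s a = 1

/-- Valid transition probabilities `p s a s' = p(s'|s,a)`. -/
def IsTransKer (m n : ℕ) (p : Fin m → Fin n → Fin m → ℝ) : Prop :=
  (∀ s a s', 0 ≤ p s a s') ∧ ∀ s a, ∑ s', p s a s' = 1

/-- Max absolute entry norm on vectors. -/
noncomputable def vecNorm {m : ℕ} (v : Fin m → ℝ) : ℝ := ⨆ i, |v i|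

/-- Maximum absolute row-sum norm on matrices. -/
noncomputable def rowSumNorm {m n : ℕ} (B : Matrix (Fin m) (Fin n) ℝ) : ℝ :=
  ⨆ i, ∑ j, |B i j|

/-- Max absolute entry norm on matrices. -/
noncomputable def maxNorm {m n : ℕ} (B : Matrix (Fin m) (Fin n) ℝ) : ℝ :=
  ⨆ i, ⨆ j, |B i j|

/-- `(R_d)_s = ∑_a R(s,a) d(a|s)`. -/
noncomputable def Rvec {m n : ℕ} (R d : Matrix (Fin m) (Fin n) ℝ) : Fin m → ℝ :=
  fun s => ∑ a, R s a * d s a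

/-- `(P_d)_{s,s'} = ∑_a p(s'|s,a) d(a|s)`. -/
noncomputable def Pmat {m n : ℕ} (p : Fin m → Fin n → Fin m → ℝ)
    (d : Matrix (Fin m) (Fin n) ℝ) : Matrix (Fin m) (Fin m) ℝ :=
  fun s s' => ∑ a, p s a s' * d s a

/-- `P_0^π = I`, `P_{t+1}^π = P_t^π ⬝ P_{d_t}`. -/
noncomputable def Ppi {m n : ℕ} (p : Fin m → Fin n → Fin m → ℝ)
    (π : ℕ → Matrix (Fin m) (Fin n) ℝ) : ℕ → Matrix (Fin m) (Fin m) ℝ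
  | 0 => 1
  | t + 1 => Ppi p π t * Pmat p (π t)

/-- Finite-horizon standard discounted cost vector `V_T(π,R)`. -/
noncomputable def VT {m n : ℕ} (β : ℝ) (p : Fin m → Fin n → Fin m → ℝ)
    (π : ℕ → Matrix (Fin m) (Fin n) ℝ) (R : Matrix (Fin m) (Fin n) ℝ) (T : ℕ) :
    Fin m → ℝ :=
  fun x => ∑ t ∈ Finset.range T, β ^ t * (Ppi p π t *ᵥ Rvec R (π t)) x

/-- Infinite-horizon standard discounted cost vector `V(π,R)`. -/
noncomputable def Vinf {m n : ℕ} (β : ℝ) (p : Fin m → Fin n → Fin m → ℝ)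
    (π : ℕ → Matrix (Fin m) (Fin n) ℝ) (R : Matrix (Fin m) (Fin n) ℝ) :
    Fin m → ℝ :=
  fun x => ∑' t : ℕ, β ^ t * (Ppi p π t *ᵥ Rvec R (π t)) x

/-- `Qrev β γ p π R T k = Q_{T-1-k}^{T,π,R}`, defined by the backward recursion. -/
noncomputable def Qrev {m n : ℕ} (β γ : ℝ) (p : Fin m → Fin n → Fin m → ℝ)
    (π : ℕ → Matrix (Fin m) (Fin n) ℝ) (R : Matrix (Fin m) (Fin n) ℝ) (T : ℕ) :
    ℕ → Matrix (Fin m) (Fin n) ℝ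
  | 0 => fun s a => Real.exp (γ * β ^ (T - 1) * R s a)
  | k + 1 => fun s a =>
      Real.exp (γ * β ^ (T - 1 - (k + 1)) * R s a) *
        ∑ s', p s a s' * ∑ a', π (T - 1 - k) s' a' * Qrev β γ p π R T k s' a'

/-- `Q_t^{T,π,R}` for `0 ≤ t ≤ T-1`. -/
noncomputable def Qmat {m n : ℕ} (β γ : ℝ) (p : Fin m → Fin n → Fin m → ℝ)
    (π : ℕ → Matrix (Fin m) (Fin n) ℝ) (R : Matrix (Fin m) (Fin n) ℝ) (T t : ℕ) :
    Matrix (Fin m) (Fin n) ℝ :=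
  Qrev β γ p π R T (T - 1 - t)

/-- Finite-horizon risk-sensitive cost vector `J_T(π,γ,R)`. -/
noncomputable def JT {m n : ℕ} (β γ : ℝ) (p : Fin m → Fin n → Fin m → ℝ)
    (π : ℕ → Matrix (Fin m) (Fin n) ℝ) (R : Matrix (Fin m) (Fin n) ℝ) (T : ℕ) :
    Fin m → ℝ :=
  fun s => ∑ a, π 0 s a * Qmat β γ p π R T 0 s a

/-- Infinite-horizon risk-sensitive cost `J(π,γ,R)(x) = lim_{T→∞} J_T(π,γ,R)(x)`. -/
noncomputable def Jinf {m n : ℕ} (β γ : ℝ) (p : Fin m → Fin n → Fin m → ℝ)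
    (π : ℕ → Matrix (Fin m) (Fin n) ℝ) (R : Matrix (Fin m) (Fin n) ℝ) (x : Fin m) : ℝ :=
  limUnder atTop (fun T => JT β γ p π R T x)

/-- The metric `μ(π₁,π₂) = sup_t δ^t ‖d_t − f_t‖_∞` on Markovian randomized policies. -/
noncomputable def policyDist {m n : ℕ} (δ : ℝ)
    (π₁ π₂ : ℕ → Matrix (Fin m) (Fin n) ℝ) : ℝ :=
  ⨆ t : ℕ, δ ^ t * rowSumNorm (π₁ t - π₂ t)

section helper

lemma my_abs_weighted_le {k : ℕ} (w f : Fin k → ℝ) (B : ℝ)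
    (hw : ∀ i, 0 ≤ w i) (hsum : ∑ i, w i = 1)
    (hf : ∀ i, |f i| ≤ B) : |∑ i, w i * f i| ≤ B := by
  calc |∑ i, w i * f i| ≤ ∑ i, |w i * f i| := Finset.abs_sum_le_sum_abs _ _
    _ = ∑ i, w i * |f i| := by
        refine Finset.sum_congr rfl fun i _ => ?_
        rw [abs_mul, abs_of_nonneg (hw i)]
    _ ≤ ∑ i, w i * B := Finset.sum_le_sum fun i _ => mul_le_mul_of_nonneg_left (hf i) (hw i)
    _ = B := by rw [← Finset.sum_mul, hsum, one_mul]

lemma my_abs_dot_le {k : ℕ} (g f : Fin k → ℝ) (B : ℝ)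
    (hf : ∀ i, |f i| ≤ B) : |∑ i, g i * f i| ≤ (∑ i, |g i|) * B := by
  calc |∑ i, g i * f i| ≤ ∑ i, |g i * f i| := Finset.abs_sum_le_sum_abs _ _
    _ = ∑ i, |g i| * |f i| := by simp [abs_mul]
    _ ≤ ∑ i, |g i| * B := Finset.sum_le_sum fun i _ =>
        mul_le_mul_of_nonneg_left (hf i) (abs_nonneg _)
    _ = (∑ i, |g i|) * B := by rw [Finset.sum_mul]

lemma my_exp_term_le {β γ C : ℝ} (hβ : 0 ≤ β) {R : ℝ} (hR : |R| ≤ C) (j : ℕ) :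
    Real.exp (γ * β ^ j * R) ≤ Real.exp (|γ| * C * β ^ j) := by
  apply Real.exp_le_exp.2
  calc γ * β ^ j * R ≤ |γ * β ^ j * R| := le_abs_self _
    _ = |γ| * β ^ j * |R| := by
        rw [abs_mul, abs_mul, abs_of_nonneg (pow_nonneg hβ _)]
    _ ≤ |γ| * β ^ j * C := by
        apply mul_le_mul_of_nonneg_left hR (by positivity)
    _ = |γ| * C * β ^ j := by ring

lemma rowSumNorm_nonneg {m n : ℕ} (B : Matrix (Fin m) (Fin n) ℝ) : 0 ≤ rowSumNorm B :=
  Real.iSup_nonneg fun i => Finset.sum_nonneg fun j _ => abs_nonneg _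

lemma row_le_rowSumNorm {m n : ℕ} (B : Matrix (Fin m) (Fin n) ℝ) (s : Fin m) :
    ∑ j, |B s j| ≤ rowSumNorm B :=
  le_ciSup (Finite.bddAbove_range fun i => ∑ j, |B i j|) s

lemma rowSumNorm_le_two {m n : ℕ} {d₁ d₂ : Matrix (Fin m) (Fin n) ℝ}
    (h₁ : IsStoch m n d₁) (h₂ : IsStoch m n d₂) : rowSumNorm (d₁ - d₂) ≤ 2 := by
  apply Real.iSup_le _ (by norm_num)
  intro s
  calc ∑ j, |(d₁ - d₂) s j| ≤ ∑ j, (d₁ s j + d₂ s j) := by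
        apply Finset.sum_le_sum
        intro j _
        calc |(d₁ - d₂) s j| = |d₁ s j - d₂ s j| := by simp [Matrix.sub_apply]
          _ ≤ |d₁ s j| + |d₂ s j| := abs_sub _ _
          _ = d₁ s j + d₂ s j := by
              rw [abs_of_nonneg (h₁.1 s j), abs_of_nonneg (h₂.1 s j)]
    _ = 2 := by rw [Finset.sum_add_distrib, h₁.2 s, h₂.2 s]; norm_num

end helper

section qlemmas

variable {m n : ℕ} {β γ C : ℝ} {p : Fin m → Fin n → Fin m → ℝ}
  {R : Matrix (Fin m) (Fin n) ℝ}

lemma Qrev_abs_le (hβ : 0 ≤ β) (hp : IsTransKer m n p)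
    {π : ℕ → Matrix (Fin m) (Fin n) ℝ} (hπ : ∀ t, IsStoch m n (π t))
    (hR : ∀ s a, |R s a| ≤ C) (T : ℕ) :
    ∀ k s a, |Qrev β γ p π R T k s a| ≤
      Real.exp (|γ| * C * ∑ i ∈ Finset.range (k + 1), β ^ (T - 1 - i)) := by
  intro k
  induction k with
  | zero =>
    intro s a
    show |Real.exp (γ * β ^ (T - 1) * R s a)| ≤ _
    rw [abs_of_pos (Real.exp_pos _), Finset.sum_range_one]
    simpa using my_exp_term_le hβ (hR s a) (T - 1 - 0)
  | succ k ih =>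
    intro s a
    show |Real.exp (γ * β ^ (T - 1 - (k + 1)) * R s a) * _| ≤ _
    rw [abs_mul, abs_of_pos (Real.exp_pos _)]
    have hA : |∑ s', p s a s' * ∑ a', π (T - 1 - k) s' a' * Qrev β γ p π R T k s' a'| ≤
        Real.exp (|γ| * C * ∑ i ∈ Finset.range (k + 1), β ^ (T - 1 - i)) := by
      apply my_abs_weighted_le _ _ _ (hp.1 s a) (hp.2 s a)
      intro s'
      exact my_abs_weighted_le _ _ _ ((hπ _).1 s') ((hπ _).2 s') fun a' => ih s' a'
    calc Real.exp (γ * β ^ (T - 1 - (k + 1)) * R s a) *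
          |∑ s', p s a s' * ∑ a', π (T - 1 - k) s' a' * Qrev β γ p π R T k s' a'| ≤
        Real.exp (|γ| * C * β ^ (T - 1 - (k + 1))) *
          Real.exp (|γ| * C * ∑ i ∈ Finset.range (k + 1), β ^ (T - 1 - i)) := by
          apply mul_le_mul (my_exp_term_le hβ (hR s a) _) hA (abs_nonneg _) (Real.exp_pos _).le
      _ = Real.exp (|γ| * C * ∑ i ∈ Finset.range (k + 1 + 1), β ^ (T - 1 - i)) := by
          rw [← Real.exp_add,
            Finset.sum_range_succ (fun i => β ^ (T - 1 - i)) (k + 1)]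
          congr 1
          ring

lemma Qrev_diff_le (hβ : 0 ≤ β) (hp : IsTransKer m n p)
    {π₁ π₂ : ℕ → Matrix (Fin m) (Fin n) ℝ}
    (h₁ : ∀ t, IsStoch m n (π₁ t)) (h₂ : ∀ t, IsStoch m n (π₂ t))
    (hR : ∀ s a, |R s a| ≤ C) (T : ℕ) :
    ∀ k s a, |Qrev β γ p π₁ R T k s a - Qrev β γ p π₂ R T k s a| ≤
      Real.exp (|γ| * C * ∑ i ∈ Finset.range (k + 1), β ^ (T - 1 - i)) *
        ∑ j ∈ Finset.range k, rowSumNorm (π₁ (T - 1 - j) - π₂ (T - 1 - j)) := by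
  intro k
  induction k with
  | zero =>
    intro s a
    show |Real.exp (γ * β ^ (T - 1) * R s a) - Real.exp (γ * β ^ (T - 1) * R s a)| ≤ _
    simp
  | succ k ih =>
    intro s a
    set E := Real.exp (|γ| * C * ∑ i ∈ Finset.range (k + 1), β ^ (T - 1 - i)) with hE
    set S := ∑ j ∈ Finset.range k, rowSumNorm (π₁ (T - 1 - j) - π₂ (T - 1 - j)) with hS
    set r := rowSumNorm (π₁ (T - 1 - k) - π₂ (T - 1 - k)) with hr
    have hEpos : 0 < E := Real.exp_pos _
    -- inner difference bound
    have hinner : ∀ s' : Fin m,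
        |(∑ a', π₁ (T - 1 - k) s' a' * Qrev β γ p π₁ R T k s' a') -
          ∑ a', π₂ (T - 1 - k) s' a' * Qrev β γ p π₂ R T k s' a'| ≤ E * S + r * E := by
      intro s'
      have hsplit : (∑ a', π₁ (T - 1 - k) s' a' * Qrev β γ p π₁ R T k s' a') -
          ∑ a', π₂ (T - 1 - k) s' a' * Qrev β γ p π₂ R T k s' a' =
          (∑ a', π₁ (T - 1 - k) s' a' *
            (Qrev β γ p π₁ R T k s' a' - Qrev β γ p π₂ R T k s' a')) +
          ∑ a', (π₁ (T - 1 - k) - π₂ (T - 1 - k)) s' a' * Qrev β γ p π₂ R T k s' a' := by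
        rw [← Finset.sum_add_distrib, ← Finset.sum_sub_distrib]
        apply Finset.sum_congr rfl
        intro a' _
        simp [Matrix.sub_apply]
        ring
      rw [hsplit]
      apply (abs_add_le _ _).trans
      apply add_le_add
      · exact my_abs_weighted_le _ _ _ ((h₁ (T - 1 - k)).1 s') ((h₁ (T - 1 - k)).2 s')
          fun a' => ih s' a'
      · calc |∑ a', (π₁ (T - 1 - k) - π₂ (T - 1 - k)) s' a' * Qrev β γ p π₂ R T k s' a'| ≤
            (∑ a', |(π₁ (T - 1 - k) - π₂ (T - 1 - k)) s' a'|) * E :=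
              my_abs_dot_le _ _ _ fun a' => Qrev_abs_le hβ hp h₂ hR T k s' a'
          _ ≤ r * E := by
              apply mul_le_mul_of_nonneg_right (row_le_rowSumNorm _ s') hEpos.le
    have houter : |(∑ s', p s a s' * ∑ a', π₁ (T - 1 - k) s' a' * Qrev β γ p π₁ R T k s' a') -
        ∑ s', p s a s' * ∑ a', π₂ (T - 1 - k) s' a' * Qrev β γ p π₂ R T k s' a'| ≤
        E * S + r * E := by
      have : (∑ s', p s a s' * ∑ a', π₁ (T - 1 - k) s' a' * Qrev β γ p π₁ R T k s' a') -
          ∑ s', p s a s' * ∑ a', π₂ (T - 1 - k) s' a' * Qrev β γ p π₂ R T k s' a' =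
          ∑ s', p s a s' * ((∑ a', π₁ (T - 1 - k) s' a' * Qrev β γ p π₁ R T k s' a') -
            ∑ a', π₂ (T - 1 - k) s' a' * Qrev β γ p π₂ R T k s' a') := by
        rw [← Finset.sum_sub_distrib]
        exact Finset.sum_congr rfl fun s' _ => by ring
      rw [this]
      exact my_abs_weighted_le _ _ _ (hp.1 s a) (hp.2 s a) hinner
    show |Real.exp (γ * β ^ (T - 1 - (k + 1)) * R s a) * _ -
        Real.exp (γ * β ^ (T - 1 - (k + 1)) * R s a) * _| ≤ _
    rw [← mul_sub, abs_mul, abs_of_pos (Real.exp_pos _)]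
    calc Real.exp (γ * β ^ (T - 1 - (k + 1)) * R s a) * _ ≤
        Real.exp (|γ| * C * β ^ (T - 1 - (k + 1))) * (E * S + r * E) :=
          mul_le_mul (my_exp_term_le hβ (hR s a) _) houter (abs_nonneg _) (Real.exp_pos _).le
      _ = (Real.exp (|γ| * C * β ^ (T - 1 - (k + 1))) * E) * (S + r) := by ring
      _ = Real.exp (|γ| * C * ∑ i ∈ Finset.range (k + 1 + 1), β ^ (T - 1 - i)) *
          ∑ j ∈ Finset.range (k + 1), rowSumNorm (π₁ (T - 1 - j) - π₂ (T - 1 - j)) := by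
          have hexp : Real.exp (|γ| * C * β ^ (T - 1 - (k + 1))) * E =
              Real.exp (|γ| * C * ∑ i ∈ Finset.range (k + 1 + 1), β ^ (T - 1 - i)) := by
            rw [hE, ← Real.exp_add,
              Finset.sum_range_succ (fun i => β ^ (T - 1 - i)) (k + 1)]
            congr 1
            ring
          have hsum2 : S + r =
              ∑ j ∈ Finset.range (k + 1), rowSumNorm (π₁ (T - 1 - j) - π₂ (T - 1 - j)) := by
            rw [hS, hr, Finset.sum_range_succ]
          rw [hexp, hsum2]

end qlemmas

/-- the map `π ↦ J_T(π,γ,R)` is Lipschitz with constant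
`δ^{−(T−1)} (1−δ)^{−1} exp(|γ| K (1 − β^T))` with respect to the metric `μ`. -/
theorem stmt_9 (m n : ℕ) (hm : 1 ≤ m) (hn : 1 ≤ n)
    (p : Fin m → Fin n → Fin m → ℝ) (hp : IsTransKer m n p)
    (β : ℝ) (hβ0 : 0 < β) (hβ1 : β < 1)
    (γ : ℝ) (hγ : γ ≠ 0)
    (C : ℝ) (hC : 0 < C)
    (δ : ℝ) (hδ : β < δ) (hδ1 : δ < 1)
    (R : Matrix (Fin m) (Fin n) ℝ) (hR : ∀ s a, |R s a| ≤ C)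
    (T : ℕ) (hT : 1 ≤ T)
    (π₁ π₂ : ℕ → Matrix (Fin m) (Fin n) ℝ)
    (h₁ : ∀ t, IsStoch m n (π₁ t)) (h₂ : ∀ t, IsStoch m n (π₂ t)) :
    vecNorm (JT β γ p π₁ R T - JT β γ p π₂ R T) ≤
      (δ ^ (T - 1))⁻¹ * (1 - δ)⁻¹ * Real.exp (|γ| * (C / (1 - β)) * (1 - β ^ T)) *
        policyDist δ π₁ π₂ := by
  haveI : NeZero m := ⟨by omega⟩
  obtain ⟨T', rfl⟩ : ∃ T', T = T' + 1 := ⟨T - 1, by omega⟩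
  simp only [Nat.add_sub_cancel]
  have hδ0 : (0:ℝ) < δ := hβ0.trans hδ
  have hμbdd : BddAbove (Set.range fun t => δ ^ t * rowSumNorm (π₁ t - π₂ t)) := by
    refine ⟨2, ?_⟩
    rintro x ⟨t, rfl⟩
    calc δ ^ t * rowSumNorm (π₁ t - π₂ t) ≤ 1 * 2 :=
        mul_le_mul (pow_le_one₀ hδ0.le hδ1.le) (rowSumNorm_le_two (h₁ t) (h₂ t))
          (rowSumNorm_nonneg _) zero_le_one
      _ = 2 := by norm_num
  have hμ0 : 0 ≤ policyDist δ π₁ π₂ :=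
    Real.iSup_nonneg fun t => mul_nonneg (pow_nonneg hδ0.le t) (rowSumNorm_nonneg _)
  have hrt : ∀ t, rowSumNorm (π₁ t - π₂ t) ≤ (δ ^ t)⁻¹ * policyDist δ π₁ π₂ := by
    intro t
    have h : δ ^ t * rowSumNorm (π₁ t - π₂ t) ≤ policyDist δ π₁ π₂ := le_ciSup hμbdd t
    have hpos : (0:ℝ) < δ ^ t := pow_pos hδ0 t
    calc rowSumNorm (π₁ t - π₂ t)
        = (δ ^ t)⁻¹ * (δ ^ t * rowSumNorm (π₁ t - π₂ t)) := by field_simp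
      _ ≤ (δ ^ t)⁻¹ * policyDist δ π₁ π₂ :=
          mul_le_mul_of_nonneg_left h (by positivity)
  set E := Real.exp (|γ| * C * ∑ i ∈ Finset.range (T' + 1), β ^ (T' - i)) with hE
  have hdiff := Qrev_diff_le (γ := γ) hβ0.le hp h₁ h₂ hR (T' + 1) T'
  have hbnd := Qrev_abs_le (γ := γ) hβ0.le hp h₂ hR (T' + 1) T'
  simp only [Nat.add_sub_cancel] at hdiff hbnd
  have hkey : ∀ s, |JT β γ p π₁ R (T' + 1) s - JT β γ p π₂ R (T' + 1) s| ≤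
      E * ∑ j ∈ Finset.range (T' + 1), rowSumNorm (π₁ (T' - j) - π₂ (T' - j)) := by
    intro s
    have hsplit : JT β γ p π₁ R (T' + 1) s - JT β γ p π₂ R (T' + 1) s =
        (∑ a, π₁ 0 s a *
          (Qrev β γ p π₁ R (T' + 1) T' s a - Qrev β γ p π₂ R (T' + 1) T' s a)) +
        ∑ a, (π₁ 0 - π₂ 0) s a * Qrev β γ p π₂ R (T' + 1) T' s a := by
      show (∑ a, π₁ 0 s a * Qrev β γ p π₁ R (T' + 1) T' s a) -
          (∑ a, π₂ 0 s a * Qrev β γ p π₂ R (T' + 1) T' s a) = _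
      rw [← Finset.sum_add_distrib, ← Finset.sum_sub_distrib]
      apply Finset.sum_congr rfl
      intro a _
      simp only [Matrix.sub_apply]
      ring
    rw [hsplit]
    calc |(∑ a, π₁ 0 s a *
          (Qrev β γ p π₁ R (T' + 1) T' s a - Qrev β γ p π₂ R (T' + 1) T' s a)) +
          ∑ a, (π₁ 0 - π₂ 0) s a * Qrev β γ p π₂ R (T' + 1) T' s a| ≤
        |∑ a, π₁ 0 s a *
          (Qrev β γ p π₁ R (T' + 1) T' s a - Qrev β γ p π₂ R (T' + 1) T' s a)| +
        |∑ a, (π₁ 0 - π₂ 0) s a * Qrev β γ p π₂ R (T' + 1) T' s a| := abs_add_le _ _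
      _ ≤ (E * ∑ j ∈ Finset.range T', rowSumNorm (π₁ (T' - j) - π₂ (T' - j))) +
          rowSumNorm (π₁ 0 - π₂ 0) * E := by
          apply add_le_add
          · exact my_abs_weighted_le _ _ _ ((h₁ 0).1 s) ((h₁ 0).2 s) fun a => hdiff s a
          · calc |∑ a, (π₁ 0 - π₂ 0) s a * Qrev β γ p π₂ R (T' + 1) T' s a| ≤
                (∑ a, |(π₁ 0 - π₂ 0) s a|) * E := my_abs_dot_le _ _ _ fun a => hbnd s a
              _ ≤ rowSumNorm (π₁ 0 - π₂ 0) * E :=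
                  mul_le_mul_of_nonneg_right (row_le_rowSumNorm _ s) (Real.exp_pos _).le
      _ = E * ∑ j ∈ Finset.range (T' + 1), rowSumNorm (π₁ (T' - j) - π₂ (T' - j)) := by
          rw [Finset.sum_range_succ, Nat.sub_self]
          ring
  have hsum_le : ∑ j ∈ Finset.range (T' + 1), rowSumNorm (π₁ (T' - j) - π₂ (T' - j)) ≤
      (1 - δ)⁻¹ * ((δ ^ T')⁻¹ * policyDist δ π₁ π₂) := by
    have step1 : ∑ j ∈ Finset.range (T' + 1), rowSumNorm (π₁ (T' - j) - π₂ (T' - j)) ≤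
        ∑ j ∈ Finset.range (T' + 1), δ ^ j * ((δ ^ T')⁻¹ * policyDist δ π₁ π₂) := by
      apply Finset.sum_le_sum
      intro j hj
      have hjT : j ≤ T' := by have := Finset.mem_range.1 hj; omega
      have hpow : δ ^ (T' - j) * δ ^ j = δ ^ T' := by
        rw [← pow_add]; congr 1; omega
      have hinv : (δ ^ (T' - j))⁻¹ = δ ^ j * (δ ^ T')⁻¹ := by
        rw [← hpow, mul_inv]
        field_simp
      calc rowSumNorm (π₁ (T' - j) - π₂ (T' - j)) ≤
          (δ ^ (T' - j))⁻¹ * policyDist δ π₁ π₂ := hrt _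
        _ = δ ^ j * ((δ ^ T')⁻¹ * policyDist δ π₁ π₂) := by rw [hinv]; ring
    have step2 : ∑ j ∈ Finset.range (T' + 1), δ ^ j ≤ (1 - δ)⁻¹ := by
      have h1δ : (0:ℝ) < 1 - δ := by linarith
      have hδT : (0:ℝ) ≤ δ ^ (T' + 1) := pow_nonneg hδ0.le _
      rw [geom_sum_eq (ne_of_lt hδ1)]
      have heq : (δ ^ (T' + 1) - 1) / (δ - 1) = (1 - δ ^ (T' + 1)) / (1 - δ) := by
        rw [div_eq_div_iff (by linarith) (by linarith)]; ring
      rw [heq, ← one_div]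
      gcongr
      linarith
    calc ∑ j ∈ Finset.range (T' + 1), rowSumNorm (π₁ (T' - j) - π₂ (T' - j)) ≤
        ∑ j ∈ Finset.range (T' + 1), δ ^ j * ((δ ^ T')⁻¹ * policyDist δ π₁ π₂) := step1
      _ = (∑ j ∈ Finset.range (T' + 1), δ ^ j) * ((δ ^ T')⁻¹ * policyDist δ π₁ π₂) := by
          rw [← Finset.sum_mul]
      _ ≤ (1 - δ)⁻¹ * ((δ ^ T')⁻¹ * policyDist δ π₁ π₂) :=
          mul_le_mul_of_nonneg_right step2 (by positivity)
  have hEeq : E = Real.exp (|γ| * (C / (1 - β)) * (1 - β ^ (T' + 1))) := by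
    rw [hE]
    congr 1
    have hrefl := Finset.sum_range_reflect (fun j => β ^ j) (T' + 1)
    simp only [Nat.add_sub_cancel] at hrefl
    rw [hrefl, geom_sum_eq (ne_of_lt hβ1)]
    have h1β : (1:ℝ) - β ≠ 0 := by intro h; linarith [sub_eq_zero.1 h]
    have h1β' : β - 1 ≠ 0 := fun h => h1β (by linarith [sub_eq_zero.1 h])
    field_simp
    ring
  apply ciSup_le
  intro s
  have hs : |(JT β γ p π₁ R (T' + 1) - JT β γ p π₂ R (T' + 1)) s| =
      |JT β γ p π₁ R (T' + 1) s - JT β γ p π₂ R (T' + 1) s| := rfl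
  rw [hs]
  calc |JT β γ p π₁ R (T' + 1) s - JT β γ p π₂ R (T' + 1) s| ≤
      E * ∑ j ∈ Finset.range (T' + 1), rowSumNorm (π₁ (T' - j) - π₂ (T' - j)) := hkey s
    _ ≤ E * ((1 - δ)⁻¹ * ((δ ^ T')⁻¹ * policyDist δ π₁ π₂)) :=
        mul_le_mul_of_nonneg_left hsum_le (Real.exp_pos _).le
    _ = (δ ^ T')⁻¹ * (1 - δ)⁻¹ * Real.exp (|γ| * (C / (1 - β)) * (1 - β ^ (T' + 1))) *
        policyDist δ π₁ π₂ := by rw [hEeq]; ring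
end

section
/- Let R ∈ ℝ^{m×n} have every entry of absolute value at most C, and let K := C/(1−β). Then for every Markovian randomized policy π, every state x and every T ≥ 1, exp(−|γ| K β^T) · J_T(π,γ,R)(x) ≤ J(π,γ,R)(x) ≤ exp(|γ| K β^T) · J_T(π,γ,R)(x), where J(π,γ,R)(x) := lim_{T'→∞} J_{T'}(π,γ,R)(x) is the infinite-horizon risk-sensitive cost (this limit exists). -/
open Finset Filter Matrix

section AuxStmt12

variable {m n : ℕ} {p : Fin m → Fin n → Fin m → ℝ} {β γ C : ℝ}
  {R : Matrix (Fin m) (Fin n) ℝ} {π : ℕ → Matrix (Fin m) (Fin n) ℝ}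

private lemma wsum_le {k : ℕ} {w c : Fin k → ℝ} {hi : ℝ}
    (hw : ∀ i, 0 ≤ w i) (hs : ∑ i, w i = 1) (h : ∀ i, c i ≤ hi) :
    ∑ i, w i * c i ≤ hi := by
  calc ∑ i, w i * c i ≤ ∑ i, w i * hi :=
        Finset.sum_le_sum fun i _ => mul_le_mul_of_nonneg_left (h i) (hw i)
    _ = hi := by rw [← Finset.sum_mul, hs, one_mul]

private lemma wsum_ge {k : ℕ} {w c : Fin k → ℝ} {lo : ℝ}
    (hw : ∀ i, 0 ≤ w i) (hs : ∑ i, w i = 1) (h : ∀ i, lo ≤ c i) :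
    lo ≤ ∑ i, w i * c i := by
  calc lo = ∑ i, w i * lo := by rw [← Finset.sum_mul, hs, one_mul]
    _ ≤ ∑ i, w i * c i :=
        Finset.sum_le_sum fun i _ => mul_le_mul_of_nonneg_left (h i) (hw i)

private lemma exp_le_bnd (hβ0 : 0 < β) {r : ℝ} (hr : |r| ≤ C) (t : ℕ) :
    Real.exp (γ * β ^ t * r) ≤ Real.exp (|γ| * C * β ^ t) := by
  apply Real.exp_le_exp.2
  have h1 : |γ * β ^ t * r| = |γ| * β ^ t * |r| := by
    rw [abs_mul, abs_mul, abs_of_pos (pow_pos hβ0 t)]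
  have h3 : |γ| * β ^ t * |r| ≤ |γ| * β ^ t * C :=
    mul_le_mul_of_nonneg_left hr (mul_nonneg (abs_nonneg γ) (pow_pos hβ0 t).le)
  have h4 : |γ| * C * β ^ t = |γ| * β ^ t * C := by ring
  linarith [le_abs_self (γ * β ^ t * r)]

private lemma exp_ge_bnd (hβ0 : 0 < β) {r : ℝ} (hr : |r| ≤ C) (t : ℕ) :
    Real.exp (-(|γ| * C * β ^ t)) ≤ Real.exp (γ * β ^ t * r) := by
  apply Real.exp_le_exp.2
  have h1 : |γ * β ^ t * r| = |γ| * β ^ t * |r| := by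
    rw [abs_mul, abs_mul, abs_of_pos (pow_pos hβ0 t)]
  have h3 : |γ| * β ^ t * |r| ≤ |γ| * β ^ t * C :=
    mul_le_mul_of_nonneg_left hr (mul_nonneg (abs_nonneg γ) (pow_pos hβ0 t).le)
  have h4 : |γ| * C * β ^ t = |γ| * β ^ t * C := by ring
  linarith [neg_abs_le (γ * β ^ t * r)]

private lemma Qrev_nonneg (hp : IsTransKer m n p) (hπ : ∀ t, IsStoch m n (π t))
    (T : ℕ) : ∀ k s a, 0 ≤ Qrev β γ p π R T k s a := by
  intro k
  induction k with
  | zero => intro s a; exact (Real.exp_pos _).le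
  | succ k ih =>
    intro s a
    simp only [Qrev]
    apply mul_nonneg (Real.exp_pos _).le
    apply Finset.sum_nonneg; intro s' _
    apply mul_nonneg (hp.1 _ _ _)
    apply Finset.sum_nonneg; intro a' _
    exact mul_nonneg ((hπ _).1 _ _) (ih s' a')

private lemma Qrev_zero (T : ℕ) (s : Fin m) (a : Fin n) :
    Qrev β γ p π R T 0 s a = Real.exp (γ * β ^ (T - 1) * R s a) := by
  simp only [Qrev]

private lemma Qrev_one (T : ℕ) (s : Fin m) (a : Fin n) :
    Qrev β γ p π R (T + 1) (0 + 1) s a = Real.exp (γ * β ^ (T - 1) * R s a) *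
      ∑ s', p s a s' * ∑ a', π T s' a' * Real.exp (γ * β ^ T * R s' a') := by
  simp only [Qrev]
  norm_num

private lemma Qrev_succ_succ (T k : ℕ) (s : Fin m) (a : Fin n) :
    Qrev β γ p π R (T + 1) (k + 1 + 1) s a =
      Real.exp (γ * β ^ (T - 1 - (k + 1)) * R s a) *
        ∑ s', p s a s' * ∑ a', π (T - 1 - k) s' a' * Qrev β γ p π R (T + 1) (k + 1) s' a' := by
  simp only [Qrev]
  rw [show T + 1 - 1 - (k + 1 + 1) = T - 1 - (k + 1) from by omega,
      show T + 1 - 1 - (k + 1) = T - 1 - k from by omega]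

private lemma Qrev_succ (T k : ℕ) (s : Fin m) (a : Fin n) :
    Qrev β γ p π R T (k + 1) s a =
      Real.exp (γ * β ^ (T - 1 - (k + 1)) * R s a) *
        ∑ s', p s a s' * ∑ a', π (T - 1 - k) s' a' * Qrev β γ p π R T k s' a' := by
  simp only [Qrev]

private lemma Qstep (hp : IsTransKer m n p) (hπ : ∀ t, IsStoch m n (π t))
    (hβ0 : 0 < β) (hR : ∀ s a, |R s a| ≤ C) (T : ℕ) :
    ∀ k s a,
      Real.exp (-(|γ| * C * β ^ T)) * Qrev β γ p π R T k s a
        ≤ Qrev β γ p π R (T + 1) (k + 1) s a ∧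
      Qrev β γ p π R (T + 1) (k + 1) s a
        ≤ Real.exp (|γ| * C * β ^ T) * Qrev β γ p π R T k s a := by
  intro k
  induction k with
  | zero =>
    intro s a
    rw [Qrev_one, Qrev_zero]
    constructor
    · have inner : ∀ s', Real.exp (-(|γ| * C * β ^ T))
          ≤ ∑ a', π T s' a' * Real.exp (γ * β ^ T * R s' a') := fun s' =>
        wsum_ge ((hπ T).1 s') ((hπ T).2 s') (fun a' => exp_ge_bnd hβ0 (hR s' a') T)
      have outer := wsum_ge (fun s' => hp.1 s a s') (hp.2 s a) inner
      rw [mul_comm]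
      exact mul_le_mul_of_nonneg_left outer (Real.exp_pos _).le
    · have inner : ∀ s', (∑ a', π T s' a' * Real.exp (γ * β ^ T * R s' a'))
          ≤ Real.exp (|γ| * C * β ^ T) := fun s' =>
        wsum_le ((hπ T).1 s') ((hπ T).2 s') (fun a' => exp_le_bnd hβ0 (hR s' a') T)
      have outer := wsum_le (fun s' => hp.1 s a s') (hp.2 s a) inner
      rw [mul_comm (Real.exp (|γ| * C * β ^ T))]
      exact mul_le_mul_of_nonneg_left outer (Real.exp_pos _).le
  | succ k ih =>
    intro s a
    rw [Qrev_succ_succ, Qrev_succ]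
    set E := Real.exp (γ * β ^ (T - 1 - (k + 1)) * R s a) with hE
    constructor
    · have key : Real.exp (-(|γ| * C * β ^ T)) *
          (∑ s', p s a s' * ∑ a', π (T - 1 - k) s' a' * Qrev β γ p π R T k s' a')
          ≤ ∑ s', p s a s' * ∑ a', π (T - 1 - k) s' a' * Qrev β γ p π R (T + 1) (k + 1) s' a' := by
        rw [Finset.mul_sum]
        refine Finset.sum_le_sum fun s' _ => ?_
        rw [mul_left_comm]
        refine mul_le_mul_of_nonneg_left ?_ (hp.1 s a s')
        rw [Finset.mul_sum]
        refine Finset.sum_le_sum fun a' _ => ?_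
        rw [mul_left_comm]
        exact mul_le_mul_of_nonneg_left (ih s' a').1 ((hπ _).1 s' a')
      calc Real.exp (-(|γ| * C * β ^ T)) *
            (E * ∑ s', p s a s' * ∑ a', π (T - 1 - k) s' a' * Qrev β γ p π R T k s' a')
          = E * (Real.exp (-(|γ| * C * β ^ T)) *
            ∑ s', p s a s' * ∑ a', π (T - 1 - k) s' a' * Qrev β γ p π R T k s' a') := by ring
        _ ≤ E * ∑ s', p s a s' * ∑ a', π (T - 1 - k) s' a' * Qrev β γ p π R (T + 1) (k + 1) s' a' :=
            mul_le_mul_of_nonneg_left key (Real.exp_pos _).le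
    · have key : (∑ s', p s a s' * ∑ a', π (T - 1 - k) s' a' * Qrev β γ p π R (T + 1) (k + 1) s' a')
          ≤ Real.exp (|γ| * C * β ^ T) *
            ∑ s', p s a s' * ∑ a', π (T - 1 - k) s' a' * Qrev β γ p π R T k s' a' := by
        rw [Finset.mul_sum]
        refine Finset.sum_le_sum fun s' _ => ?_
        rw [mul_left_comm]
        refine mul_le_mul_of_nonneg_left ?_ (hp.1 s a s')
        rw [Finset.mul_sum]
        refine Finset.sum_le_sum fun a' _ => ?_
        rw [mul_left_comm]
        exact mul_le_mul_of_nonneg_left (ih s' a').2 ((hπ _).1 s' a')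
      calc E * ∑ s', p s a s' * ∑ a', π (T - 1 - k) s' a' * Qrev β γ p π R (T + 1) (k + 1) s' a'
          ≤ E * (Real.exp (|γ| * C * β ^ T) *
            ∑ s', p s a s' * ∑ a', π (T - 1 - k) s' a' * Qrev β γ p π R T k s' a') :=
            mul_le_mul_of_nonneg_left key (Real.exp_pos _).le
        _ = Real.exp (|γ| * C * β ^ T) *
            (E * ∑ s', p s a s' * ∑ a', π (T - 1 - k) s' a' * Qrev β γ p π R T k s' a') := by ring

private lemma JT_eq (T : ℕ) (x : Fin m) :
    JT β γ p π R T x = ∑ a, π 0 x a * Qrev β γ p π R T (T - 1) x a := by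
  simp [JT, Qmat]

private lemma JT_nonneg (hp : IsTransKer m n p) (hπ : ∀ t, IsStoch m n (π t))
    (T : ℕ) (x : Fin m) : 0 ≤ JT β γ p π R T x := by
  rw [JT_eq]
  exact Finset.sum_nonneg fun a _ =>
    mul_nonneg ((hπ 0).1 x a) (Qrev_nonneg hp hπ T _ x a)

private lemma JT_step (hp : IsTransKer m n p) (hπ : ∀ t, IsStoch m n (π t))
    (hβ0 : 0 < β) (hR : ∀ s a, |R s a| ≤ C) {T : ℕ} (hT : 1 ≤ T) (x : Fin m) :
    Real.exp (-(|γ| * C * β ^ T)) * JT β γ p π R T x ≤ JT β γ p π R (T + 1) x ∧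
    JT β γ p π R (T + 1) x ≤ Real.exp (|γ| * C * β ^ T) * JT β γ p π R T x := by
  have e : T + 1 - 1 = (T - 1) + 1 := by omega
  rw [JT_eq, JT_eq, e]
  constructor
  · rw [Finset.mul_sum]
    refine Finset.sum_le_sum fun a _ => ?_
    rw [mul_left_comm]
    exact mul_le_mul_of_nonneg_left (Qstep hp hπ hβ0 hR T (T - 1) x a).1 ((hπ 0).1 x a)
  · rw [Finset.mul_sum]
    refine Finset.sum_le_sum fun a _ => ?_
    rw [mul_left_comm]
    exact mul_le_mul_of_nonneg_left (Qstep hp hπ hβ0 hR T (T - 1) x a).2 ((hπ 0).1 x a)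

private lemma JT_tele (hp : IsTransKer m n p) (hπ : ∀ t, IsStoch m n (π t))
    (hβ0 : 0 < β) (hR : ∀ s a, |R s a| ≤ C) {T : ℕ} (hT : 1 ≤ T) (x : Fin m) :
    ∀ d : ℕ,
      Real.exp (-(|γ| * C * ∑ t ∈ Finset.Ico T (T + d), β ^ t)) * JT β γ p π R T x
        ≤ JT β γ p π R (T + d) x ∧
      JT β γ p π R (T + d) x
        ≤ Real.exp (|γ| * C * ∑ t ∈ Finset.Ico T (T + d), β ^ t) * JT β γ p π R T x := by
  intro d
  induction d with
  | zero => simp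
  | succ d ih =>
    have hTd : 1 ≤ T + d := by omega
    have hstep := JT_step (γ := γ) hp hπ hβ0 hR hTd x
    have hsum : ∑ t ∈ Finset.Ico T (T + (d + 1)), β ^ t
        = (∑ t ∈ Finset.Ico T (T + d), β ^ t) + β ^ (T + d) := by
      rw [show T + (d + 1) = (T + d) + 1 from rfl, Finset.sum_Ico_succ_top (by omega)]
    constructor
    · rw [hsum, show -(|γ| * C * ((∑ t ∈ Finset.Ico T (T + d), β ^ t) + β ^ (T + d)))
          = -(|γ| * C * β ^ (T + d)) + -(|γ| * C * ∑ t ∈ Finset.Ico T (T + d), β ^ t) from by ring,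
          Real.exp_add]
      calc Real.exp (-(|γ| * C * β ^ (T + d))) *
            Real.exp (-(|γ| * C * ∑ t ∈ Finset.Ico T (T + d), β ^ t)) * JT β γ p π R T x
          = Real.exp (-(|γ| * C * β ^ (T + d))) *
            (Real.exp (-(|γ| * C * ∑ t ∈ Finset.Ico T (T + d), β ^ t)) * JT β γ p π R T x) := by
            ring
        _ ≤ Real.exp (-(|γ| * C * β ^ (T + d))) * JT β γ p π R (T + d) x :=
            mul_le_mul_of_nonneg_left ih.1 (Real.exp_pos _).le
        _ ≤ JT β γ p π R (T + (d + 1)) x := hstep.1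
    · rw [hsum, show |γ| * C * ((∑ t ∈ Finset.Ico T (T + d), β ^ t) + β ^ (T + d))
          = |γ| * C * β ^ (T + d) + |γ| * C * ∑ t ∈ Finset.Ico T (T + d), β ^ t from by ring,
          Real.exp_add]
      calc JT β γ p π R (T + (d + 1)) x
          ≤ Real.exp (|γ| * C * β ^ (T + d)) * JT β γ p π R (T + d) x := hstep.2
        _ ≤ Real.exp (|γ| * C * β ^ (T + d)) *
            (Real.exp (|γ| * C * ∑ t ∈ Finset.Ico T (T + d), β ^ t) * JT β γ p π R T x) :=
            mul_le_mul_of_nonneg_left ih.2 (Real.exp_pos _).le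
        _ = Real.exp (|γ| * C * β ^ (T + d)) *
            Real.exp (|γ| * C * ∑ t ∈ Finset.Ico T (T + d), β ^ t) * JT β γ p π R T x := by
            ring

private lemma JT_comp (hp : IsTransKer m n p) (hπ : ∀ t, IsStoch m n (π t))
    (hβ0 : 0 < β) (hβ1 : β < 1) (hC : 0 < C) (hR : ∀ s a, |R s a| ≤ C)
    {T T' : ℕ} (hT : 1 ≤ T) (hTT' : T ≤ T') (x : Fin m) :
    Real.exp (-(|γ| * (C / (1 - β)) * β ^ T)) * JT β γ p π R T x ≤ JT β γ p π R T' x ∧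
    JT β γ p π R T' x ≤ Real.exp (|γ| * (C / (1 - β)) * β ^ T) * JT β γ p π R T x := by
  obtain ⟨d, rfl⟩ := Nat.exists_eq_add_of_le hTT'
  have htele := JT_tele (γ := γ) hp hπ hβ0 hR hT x d
  have hb : (0:ℝ) < 1 - β := by linarith
  have hgeo : ∑ t ∈ Finset.Ico T (T + d), β ^ t ≤ β ^ T / (1 - β) := by
    have h1 : ∑ t ∈ Finset.Ico T (T + d), β ^ t = β ^ T * ∑ j ∈ Finset.range d, β ^ j := by
      rw [Finset.sum_Ico_eq_sum_range, Finset.mul_sum]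
      simp [pow_add]
    have h2 : ∑ j ∈ Finset.range d, β ^ j ≤ (1 - β)⁻¹ :=
      le_trans (Summable.sum_le_tsum (Finset.range d) (fun i _ => pow_nonneg hβ0.le i)
        (summable_geometric_of_lt_one hβ0.le hβ1))
        (le_of_eq (tsum_geometric_of_lt_one hβ0.le hβ1))
    rw [h1, div_eq_mul_inv]
    exact mul_le_mul_of_nonneg_left h2 (pow_pos hβ0 T).le
  have hsle : |γ| * C * ∑ t ∈ Finset.Ico T (T + d), β ^ t
      ≤ |γ| * (C / (1 - β)) * β ^ T := by
    have : |γ| * (C / (1 - β)) * β ^ T = |γ| * C * (β ^ T / (1 - β)) := by ring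
    rw [this]
    exact mul_le_mul_of_nonneg_left hgeo (mul_nonneg (abs_nonneg γ) hC.le)
  have hJ : 0 ≤ JT β γ p π R T x := JT_nonneg hp hπ T x
  constructor
  · calc Real.exp (-(|γ| * (C / (1 - β)) * β ^ T)) * JT β γ p π R T x
        ≤ Real.exp (-(|γ| * C * ∑ t ∈ Finset.Ico T (T + d), β ^ t)) * JT β γ p π R T x :=
          mul_le_mul_of_nonneg_right (Real.exp_le_exp.2 (by linarith)) hJ
      _ ≤ JT β γ p π R (T + d) x := htele.1
  · calc JT β γ p π R (T + d) x
        ≤ Real.exp (|γ| * C * ∑ t ∈ Finset.Ico T (T + d), β ^ t) * JT β γ p π R T x := htele.2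
      _ ≤ Real.exp (|γ| * (C / (1 - β)) * β ^ T) * JT β γ p π R T x :=
          mul_le_mul_of_nonneg_right (Real.exp_le_exp.2 hsle) hJ

private lemma JT_bdd (hp : IsTransKer m n p) (hπ : ∀ t, IsStoch m n (π t))
    (hβ0 : 0 < β) (hβ1 : β < 1) (hC : 0 < C) (hR : ∀ s a, |R s a| ≤ C)
    {T : ℕ} (hT : 1 ≤ T) (x : Fin m) :
    JT β γ p π R T x ≤ Real.exp (|γ| * (C / (1 - β)) * β) * Real.exp (|γ| * C) := by
  have h1 := (JT_comp (γ := γ) hp hπ hβ0 hβ1 hC hR (le_refl 1) hT x).2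
  rw [pow_one] at h1
  have h2 : JT β γ p π R 1 x ≤ Real.exp (|γ| * C) := by
    rw [JT_eq]
    refine wsum_le ((hπ 0).1 x) ((hπ 0).2 x) fun a => ?_
    rw [Qrev_zero]
    have := exp_le_bnd (γ := γ) hβ0 (hR x a) 0
    simpa using this
  calc JT β γ p π R T x ≤ Real.exp (|γ| * (C / (1 - β)) * β) * JT β γ p π R 1 x := h1
    _ ≤ Real.exp (|γ| * (C / (1 - β)) * β) * Real.exp (|γ| * C) :=
        mul_le_mul_of_nonneg_left h2 (Real.exp_pos _).le

end AuxStmt12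

/-- the infinite-horizon risk-sensitive cost exists as the limit of the
finite-horizon costs and satisfies
`exp(−|γ|Kβ^T)·J_T(π,γ,R)(x) ≤ J(π,γ,R)(x) ≤ exp(|γ|Kβ^T)·J_T(π,γ,R)(x)` for all `T ≥ 1`. -/
theorem stmt_12 (m n : ℕ) (hm : 1 ≤ m) (hn : 1 ≤ n)
    (p : Fin m → Fin n → Fin m → ℝ) (hp : IsTransKer m n p)
    (β : ℝ) (hβ0 : 0 < β) (hβ1 : β < 1)
    (γ : ℝ) (hγ : γ ≠ 0)
    (C : ℝ) (hC : 0 < C)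
    (R : Matrix (Fin m) (Fin n) ℝ) (hR : ∀ s a, |R s a| ≤ C) :
    ∀ π : ℕ → Matrix (Fin m) (Fin n) ℝ, (∀ t, IsStoch m n (π t)) → ∀ x,
      Filter.Tendsto (fun T => JT β γ p π R T x) Filter.atTop (nhds (Jinf β γ p π R x)) ∧
      ∀ T : ℕ, 1 ≤ T →
        Real.exp (-(|γ| * (C / (1 - β)) * β ^ T)) * JT β γ p π R T x ≤ Jinf β γ p π R x ∧
        Jinf β γ p π R x ≤ Real.exp (|γ| * (C / (1 - β)) * β ^ T) * JT β γ p π R T x := by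
  intro π hπ x
  set K : ℝ := |γ| * (C / (1 - β)) with hK
  have hK0 : 0 ≤ K := by
    have : (0:ℝ) < 1 - β := by linarith
    exact mul_nonneg (abs_nonneg γ) (div_nonneg hC.le this.le)
  have hcomp : ∀ T, 1 ≤ T → ∀ T', T ≤ T' →
      Real.exp (-(K * β ^ T)) * JT β γ p π R T x ≤ JT β γ p π R T' x ∧
      JT β γ p π R T' x ≤ Real.exp (K * β ^ T) * JT β γ p π R T x := by
    intro T hT T' hTT'
    have := JT_comp (γ := γ) hp hπ hβ0 hβ1 hC hR hT hTT' x
    rwa [← hK] at this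
  set M : ℝ := Real.exp (K * β) * Real.exp (|γ| * C) with hM
  have hMd : ∀ T, 1 ≤ T → JT β γ p π R T x ≤ M := by
    intro T hT
    have := JT_bdd (γ := γ) hp hπ hβ0 hβ1 hC hR hT x
    rwa [← hK] at this
  have hf0 : ∀ T, 0 ≤ JT β γ p π R T x := fun T => JT_nonneg hp hπ T x
  -- the shifted sequence is Cauchy
  have hcs : CauchySeq (fun N : ℕ => JT β γ p π R (N + 1) x) := by
    rw [Metric.cauchySeq_iff']
    intro ε hε
    have hb : Tendsto (fun N : ℕ =>
        (Real.exp (K * β ^ (N + 1)) - Real.exp (-(K * β ^ (N + 1)))) * M) atTop (nhds 0) := by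
      have h1 : Tendsto (fun N : ℕ => β ^ (N + 1)) atTop (nhds 0) :=
        (tendsto_pow_atTop_nhds_zero_of_lt_one hβ0.le hβ1).comp (tendsto_add_atTop_nat 1)
      have h2 : Tendsto (fun N : ℕ => K * β ^ (N + 1)) atTop (nhds 0) := by
        simpa using h1.const_mul K
      have hA := (Real.continuous_exp.tendsto 0).comp h2
      have h2n : Tendsto (fun N : ℕ => -(K * β ^ (N + 1))) atTop (nhds 0) := by
        simpa using h2.neg
      have hB := (Real.continuous_exp.tendsto 0).comp h2n
      have h3 : Tendsto (fun N : ℕ =>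
          Real.exp (K * β ^ (N + 1)) - Real.exp (-(K * β ^ (N + 1)))) atTop (nhds 0) := by
        simpa using hA.sub hB
      simpa using h3.mul_const M
    obtain ⟨N, hN⟩ := (hb.eventually (gt_mem_nhds hε)).exists
    refine ⟨N, fun n hn => ?_⟩
    have hc := hcomp (N + 1) (by omega) (n + 1) (by omega)
    have hMN := hMd (N + 1) (by omega)
    have hf := hf0 (N + 1)
    have hKβ : 0 ≤ K * β ^ (N + 1) := mul_nonneg hK0 (pow_pos hβ0 _).le
    have he1 : Real.exp (-(K * β ^ (N + 1))) ≤ 1 := Real.exp_le_one_iff.2 (by linarith)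
    have he2 : 1 ≤ Real.exp (K * β ^ (N + 1)) := Real.one_le_exp hKβ
    rw [Real.dist_eq]
    have habs : |JT β γ p π R (n + 1) x - JT β γ p π R (N + 1) x|
        ≤ (Real.exp (K * β ^ (N + 1)) - Real.exp (-(K * β ^ (N + 1)))) * M := by
      rw [abs_sub_le_iff]
      constructor <;> nlinarith [hc.1, hc.2, hf, hMN, he1, he2]
    linarith
  obtain ⟨L, hL⟩ := cauchySeq_tendsto_of_complete hcs
  have hfL : Tendsto (fun T => JT β γ p π R T x) atTop (nhds L) :=
    (tendsto_add_atTop_iff_nat 1).1 hL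
  have hJinf : Jinf β γ p π R x = L := by
    simp only [Jinf]
    exact hfL.limUnder_eq
  refine ⟨by rw [hJinf]; exact hfL, ?_⟩
  intro T hT1
  constructor
  · rw [hJinf]
    exact ge_of_tendsto hfL (eventually_atTop.2
      ⟨T, fun T' h => by simpa [hK] using (hcomp T hT1 T' h).1⟩)
  · rw [hJinf]
    exact le_of_tendsto hfL (eventually_atTop.2
      ⟨T, fun T' h => by simpa [hK] using (hcomp T hT1 T' h).2⟩)
end
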